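/- arXiv:cs/0506104 — 2 statements merged into one kernel-verified Lean document; each statement's English description precedes it below -/
import Mathlib

section
/- Let T be a CNF theory, L ⊆ Lit(T) with L⁺ = ∅, and X ⊆ At(T) a set of atoms consistent with L. Then X is a minimal model of T if and only if X is a minimal model of T_L. -/
open Classical

/-- A literal: `(true, a)` is the atom `a`, `(false, a)` is the negated atom `¬ a`. -/
abbrev Lit : Type := Bool × ℕ

/-- A clause: a finite set of literals, viewed as the disjunction of its literals. -/
abbrev Clause : Type := Finset Lit

/-- A CNF theory: a finite set of clauses. -/
abbrev CTheory : Type := Finset Clause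

/-- A clause is proper: it contains no atom together with its negation. -/
def Clause.ok (c : Clause) : Prop :=
  ∀ a : ℕ, ¬ (((true, a) : Lit) ∈ c ∧ ((false, a) : Lit) ∈ c)

/-- The set of atoms occurring in a clause. -/
def clauseAtoms (c : Clause) : Finset ℕ := c.image Prod.snd

/-- `At(T)`: the set of atoms occurring in a CNF theory. -/
def thAtoms (T : CTheory) : Finset ℕ := T.sup clauseAtoms

/-- A set of atoms `M` satisfies a literal `l`. -/
def satLit (M : Finset ℕ) (l : Lit) : Prop := if l.1 then l.2 ∈ M else l.2 ∉ M

/-- `M` is a model of the CNF theory `T`. -/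
def isModel (M : Finset ℕ) (T : CTheory) : Prop := ∀ c ∈ T, ∃ l ∈ c, satLit M l

/-- `M` is a minimal model of `T`: a model `M ⊆ At(T)` no proper subset of which is a model. -/
def isMinModel (M : Finset ℕ) (T : CTheory) : Prop :=
  isModel M T ∧ M ⊆ thAtoms T ∧ ∀ M' : Finset ℕ, M' ⊂ M → ¬ isModel M' T

/-- The dual of a literal. -/
def litNeg (l : Lit) : Lit := (!l.1, l.2)

/-- `L̄`: the set of duals of the literals of `L`. -/
def negSet (L : Finset Lit) : Finset Lit := L.image litNeg

/-- `L⁺`: the set of atoms belonging to `L`. -/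
def posAtoms (L : Finset Lit) : Finset ℕ := (L.filter (fun l => l.1 = true)).image Prod.snd

/-- `L⁻`: the set of atoms whose negation belongs to `L`. -/
def negAtoms (L : Finset Lit) : Finset ℕ := (L.filter (fun l => l.1 = false)).image Prod.snd

/-- A set of atoms `M` is consistent with a set of literals `L` if `L⁺ ⊆ M` and `L⁻ ∩ M = ∅`. -/
def consistentWith (M : Finset ℕ) (L : Finset Lit) : Prop :=
  posAtoms L ⊆ M ∧ ∀ a ∈ negAtoms L, a ∉ M

/-- `Lit(T)`: the set of all literals over the atoms of `T`. -/
def litsOf (T : CTheory) : Finset Lit :=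
  (thAtoms T).image (fun a => ((true, a) : Lit)) ∪
    (thAtoms T).image (fun a => ((false, a) : Lit))

/-- `T_L = {c \ L̄ : c ∈ T, c ∩ L = ∅}`. -/
def reduceTh (T : CTheory) (L : Finset Lit) : CTheory :=
  (T.filter (fun c => ∀ l ∈ c, l ∉ L)).image (fun c => c \ negSet L)

/-! Since `L⁺ = ∅`, every subset of `X` satisfies all literals of `L`. For a set `M` satisfying
`L`, being a model of `T` and of `T_L` coincide: the clauses dropped from `T` meet `L` and are
satisfied by `M`, and the literals of `L̄` removed from the others are false in `M`. Minimality of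
`X` only concerns models contained in `X`, and `X ⊆ At(T)` follows from minimality, since
`X ∩ At(T)` is a model whenever `X` is. -/

lemma satLit_congr {M M' : Finset ℕ} {l : Lit} (h : l.2 ∈ M ↔ l.2 ∈ M') :
    satLit M l ↔ satLit M' l := by
  unfold satLit
  split_ifs
  exacts [h, not_congr h]

lemma satLit_false_iff {M : Finset ℕ} {a : ℕ} : satLit M (false, a) ↔ a ∉ M := by
  simp [satLit]

lemma mem_thAtoms {T : CTheory} {c : Clause} {l : Lit} (hc : c ∈ T) (hl : l ∈ c) :
    l.2 ∈ thAtoms T :=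
  Finset.mem_sup.2 ⟨c, hc, Finset.mem_image_of_mem _ hl⟩

lemma isModel.inter_thAtoms {M : Finset ℕ} {T : CTheory} (h : isModel M T) :
    isModel (M ∩ thAtoms T) T := by
  intro c hc
  obtain ⟨l, hl, hsat⟩ := h c hc
  refine ⟨l, hl, (satLit_congr ?_).1 hsat⟩
  simp [mem_thAtoms hc hl]

lemma isMinModel_iff {M : Finset ℕ} {T : CTheory} :
    isMinModel M T ↔ isModel M T ∧ ∀ M' : Finset ℕ, M' ⊂ M → ¬ isModel M' T := by
  refine ⟨fun ⟨hmod, _, hmin⟩ => ⟨hmod, hmin⟩, fun ⟨hmod, hmin⟩ => ⟨hmod, ?_, hmin⟩⟩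
  by_contra hsub
  have hssub : M ∩ thAtoms T ⊂ M :=
    Finset.inter_subset_left.ssubset_of_ne (mt Finset.inter_eq_left.1 hsub)
  exact hmin _ hssub hmod.inter_thAtoms

lemma isModel_iff_isModel_reduceTh {M : Finset ℕ} {T : CTheory} {L : Finset Lit}
    (hL : ∀ l ∈ L, satLit M l) : isModel M T ↔ isModel M (reduceTh T L) := by
  have notMem_negSet : ∀ {l}, satLit M l → l ∉ negSet L := by
    rintro l hsat hl
    obtain ⟨l', hl', rfl⟩ := Finset.mem_image.1 hl
    have := hL l' hl'
    rcases l' with ⟨_ | _, a⟩ <;> simp_all [satLit, litNeg]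
  constructor
  · intro h c' hc'
    obtain ⟨c, hc, rfl⟩ := Finset.mem_image.1 hc'
    obtain ⟨l, hl, hsat⟩ := h c (Finset.mem_filter.1 hc).1
    exact ⟨l, Finset.mem_sdiff.2 ⟨hl, notMem_negSet hsat⟩, hsat⟩
  · intro h c hc
    by_cases hcL : ∃ l ∈ c, l ∈ L
    · obtain ⟨l, hl, hlL⟩ := hcL
      exact ⟨l, hl, hL l hlL⟩
    · obtain ⟨l, hl, hsat⟩ := h _ (Finset.mem_image_of_mem _
        (Finset.mem_filter.2 ⟨hc, fun l hl hlL => hcL ⟨l, hl, hlL⟩⟩))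
      exact ⟨l, Finset.sdiff_subset hl, hsat⟩

lemma eq_false_of_mem_of_posAtoms_eq_empty {L : Finset Lit} (hpos : posAtoms L = ∅)
    {l : Lit} (hl : l ∈ L) : l = (false, l.2) := by
  rcases l with ⟨_ | _, a⟩
  · rfl
  · have : a ∈ posAtoms L := Finset.mem_image.2 ⟨(true, a), Finset.mem_filter.2 ⟨hl, rfl⟩, rfl⟩
    simp [hpos] at this

lemma consistentWith.satLit_of_subset {X M : Finset ℕ} {L : Finset Lit}
    (hpos : posAtoms L = ∅) (hcons : consistentWith X L) (hM : M ⊆ X) :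
    ∀ l ∈ L, satLit M l := by
  intro l hl
  have hneg := eq_false_of_mem_of_posAtoms_eq_empty hpos hl
  have hla : l.2 ∈ negAtoms L :=
    Finset.mem_image.2 ⟨l, Finset.mem_filter.2 ⟨hl, congrArg Prod.fst hneg⟩, rfl⟩
  rw [hneg, satLit_false_iff]
  exact fun ha => hcons.2 l.2 hla (hM ha)

theorem minModel_iff_minModel_reduce_general (T : CTheory)
    (L : Finset Lit) (hpos : posAtoms L = ∅)
    (X : Finset ℕ) (hcons : consistentWith X L) :
    isMinModel X T ↔ isMinModel X (reduceTh T L) := by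
  have hmodels : ∀ M ⊆ X, isModel M T ↔ isModel M (reduceTh T L) := fun M hM =>
    isModel_iff_isModel_reduceTh (hcons.satLit_of_subset hpos hM)
  rw [isMinModel_iff, isMinModel_iff, hmodels X subset_rfl]
  exact and_congr_right' (forall₂_congr fun M hM => not_congr (hmodels M hM.subset))

/-- Let `T` be a CNF theory, `L ⊆ Lit(T)` with `L⁺ = ∅`, and `X ⊆ At(T)` consistent with `L`.
Then `X` is a minimal model of `T` iff `X` is a minimal model of `T_L`. -/
theorem minModel_iff_minModel_reduce (T : CTheory) (hok : ∀ c ∈ T, Clause.ok c)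
    (L : Finset Lit) (hL : L ⊆ litsOf T) (hpos : posAtoms L = ∅)
    (X : Finset ℕ) (hX : X ⊆ thAtoms T) (hcons : consistentWith X L) :
    isMinModel X T ↔ isMinModel X (reduceTh T L) :=
  minModel_iff_minModel_reduce_general T L hpos X hcons
end

section
/- For every positive integer k there exists a 2-CNF theory T with exactly n = 3k atoms that has exactly 3^k = 3^(n/3) minimal models; hence the upper bound 3^(n/3) on the number of minimal models of a 2-CNF theory with n atoms is attained. -/
open Classical

/-!
Take `k` disjoint triangles on the atoms `3i, 3i+1, 3i+2` and, for every edge `{a, b}`, the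
clause `a ∨ b`. Models are the sets meeting every edge, i.e. missing at most one atom of each
triangle; since all clauses are positive, a model is minimal iff no single atom can be dropped,
which forces it to miss exactly one atom of each triangle. The minimal models are therefore the
complements of the transversals choosing one atom per triangle, and there are `3^k` of these.
-/

def IsPositive (T : CTheory) : Prop := ∀ c ∈ T, ∀ l ∈ c, l.1 = true

theorem isModel_mono {T : CTheory} (hT : IsPositive T) {M N : Finset ℕ} (hMN : M ⊆ N)
    (hM : isModel M T) : isModel N T := by
  intro c hc
  obtain ⟨l, hl, hsat⟩ := hM c hc
  refine ⟨l, hl, ?_⟩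
  simp only [satLit, hT c hc l hl, if_true] at hsat ⊢
  exact hMN hsat

theorem isMinModel_iff_of_isPositive {T : CTheory} (hT : IsPositive T) {M : Finset ℕ} :
    isMinModel M T ↔ isModel M T ∧ M ⊆ thAtoms T ∧ ∀ a ∈ M, ¬ isModel (M.erase a) T := by
  refine and_congr_right fun _ => and_congr_right fun _ => ⟨fun hmin a ha =>
    hmin _ (Finset.erase_ssubset ha), fun herase M' hM' hM'model => ?_⟩
  obtain ⟨a, haM, haM'⟩ := Finset.exists_of_ssubset hM'
  exact herase a haM (isModel_mono hT (Finset.subset_erase.mpr ⟨hM'.subset, haM'⟩) hM'model)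

def posClause (a b : ℕ) : Clause := {(true, a), (true, b)}

theorem exists_mem_posClause_satLit_iff {M : Finset ℕ} {a b : ℕ} :
    (∃ l ∈ posClause a b, satLit M l) ↔ a ∈ M ∨ b ∈ M := by
  simp [posClause, satLit]

theorem clauseAtoms_posClause (a b : ℕ) : clauseAtoms (posClause a b) = {a, b} := by
  simp [clauseAtoms, posClause]

namespace Triangles

variable {k : ℕ}

def atom (i : Fin k) (t : Fin 3) : ℕ := 3 * i + t

theorem atom_lt (i : Fin k) (t : Fin 3) : atom i t < 3 * k := by
  unfold atom; omega

theorem atom_inj {i j : Fin k} {s t : Fin 3} : atom i s = atom j t ↔ i = j ∧ s = t := by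
  refine ⟨fun h => ?_, fun ⟨hij, hst⟩ => hij ▸ hst ▸ rfl⟩
  unfold atom at h
  exact ⟨Fin.ext (by omega), Fin.ext (by omega)⟩

theorem exists_atom_eq {a : ℕ} (ha : a < 3 * k) : ∃ i t, atom (k := k) i t = a :=
  ⟨⟨a / 3, by omega⟩, ⟨a % 3, by omega⟩, by simp only [atom]; omega⟩

variable (k) in
def theory : CTheory :=
  (Finset.univ ×ˢ Finset.univ.offDiag).image
    fun p : Fin k × Fin 3 × Fin 3 => posClause (atom p.1 p.2.1) (atom p.1 p.2.2)

theorem mem_theory {c : Clause} :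
    c ∈ theory k ↔ ∃ (i : Fin k) (s t : Fin 3), s ≠ t ∧ c = posClause (atom i s) (atom i t) := by
  simp only [theory, Finset.mem_image, Finset.mem_product, Finset.mem_univ, Finset.mem_offDiag,
    true_and, Prod.exists]
  exact ⟨fun ⟨i, s, t, hst, hc⟩ => ⟨i, s, t, hst, hc.symm⟩,
    fun ⟨i, s, t, hst, hc⟩ => ⟨i, s, t, hst, hc.symm⟩⟩

theorem isPositive_theory : IsPositive (theory k) := by
  rintro c hc l hl
  obtain ⟨i, s, t, -, rfl⟩ := mem_theory.mp hc
  simp only [posClause, Finset.mem_insert, Finset.mem_singleton] at hl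
  rcases hl with rfl | rfl <;> rfl

theorem thAtoms_theory : thAtoms (theory k) = Finset.range (3 * k) := by
  ext a
  simp only [thAtoms, Finset.mem_sup, mem_theory, Finset.mem_range]
  constructor
  · rintro ⟨c, ⟨i, s, t, -, rfl⟩, ha⟩
    rw [clauseAtoms_posClause, Finset.mem_insert, Finset.mem_singleton] at ha
    rcases ha with rfl | rfl <;> exact atom_lt _ _
  · intro ha
    obtain ⟨i, t, rfl⟩ := exists_atom_eq ha
    exact ⟨_, ⟨i, t, t + 1, by fin_cases t <;> decide, rfl⟩, by simp [clauseAtoms_posClause]⟩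

theorem isModel_theory_iff {M : Finset ℕ} :
    isModel M (theory k) ↔ ∀ (i : Fin k) (s t : Fin 3), s ≠ t → atom i s ∈ M ∨ atom i t ∈ M := by
  simp only [isModel, mem_theory]
  constructor
  · intro h i s t hst
    exact exists_mem_posClause_satLit_iff.mp (h _ ⟨i, s, t, hst, rfl⟩)
  · rintro h c ⟨i, s, t, hst, rfl⟩
    exact exists_mem_posClause_satLit_iff.mpr (h i s t hst)

def transversal (g : Fin k → Fin 3) : Finset ℕ := Finset.univ.image fun i => atom i (g i)

theorem atom_mem_transversal_iff {g : Fin k → Fin 3} {i : Fin k} {t : Fin 3} :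
    atom i t ∈ transversal g ↔ g i = t := by
  simp only [transversal, Finset.mem_image, Finset.mem_univ, true_and, atom_inj]
  exact ⟨fun ⟨_, hj, hg⟩ => hj ▸ hg, fun h => ⟨i, rfl, h⟩⟩

theorem transversal_injective : Function.Injective (transversal (k := k)) := by
  intro g g' h
  funext i
  have hi : atom i (g i) ∈ transversal g' := h ▸ atom_mem_transversal_iff.mpr rfl
  exact (atom_mem_transversal_iff.mp hi).symm

theorem transversal_subset (g : Fin k → Fin 3) : transversal g ⊆ Finset.range (3 * k) := by
  intro a ha
  obtain ⟨i, -, rfl⟩ := Finset.mem_image.mp ha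
  exact Finset.mem_range.mpr (atom_lt _ _)

theorem isMinModel_compl_transversal (g : Fin k → Fin 3) :
    isMinModel (Finset.range (3 * k) \ transversal g) (theory k) := by
  set M := Finset.range (3 * k) \ transversal g
  have notMem_iff : ∀ i t, atom i t ∉ M ↔ g i = t := fun i t => by
    simp [M, atom_lt, atom_mem_transversal_iff]
  refine (isMinModel_iff_of_isPositive isPositive_theory).mpr
    ⟨isModel_theory_iff.mpr fun i s t hst => ?_, thAtoms_theory ▸ Finset.sdiff_subset, ?_⟩
  · by_contra! h
    exact hst (((notMem_iff i s).mp h.1).symm.trans ((notMem_iff i t).mp h.2))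
  · intro a ha hmodel
    obtain ⟨i, t, rfl⟩ := exists_atom_eq (Finset.mem_range.mp (Finset.sdiff_subset ha))
    have hgt : g i ≠ t := (notMem_iff i t).not_right.mp ha
    rcases isModel_theory_iff.mp hmodel i t (g i) hgt.symm with h | h
    · exact Finset.notMem_erase _ _ h
    · exact (notMem_iff i (g i)).mpr rfl (Finset.mem_of_mem_erase h)

theorem exists_eq_compl_transversal_of_isMinModel {M : Finset ℕ} (hM : isMinModel M (theory k)) :
    ∃ g : Fin k → Fin 3, M = Finset.range (3 * k) \ transversal g := by
  obtain ⟨hmodel, hsub, herase⟩ := (isMinModel_iff_of_isPositive isPositive_theory).mp hM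
  rw [thAtoms_theory] at hsub
  have atMostOneMissing : ∀ i s t, atom i s ∉ M → atom i t ∉ M → s = t := fun i s t hs ht => by
    by_contra hst
    exact (isModel_theory_iff.mp hmodel i s t hst).elim hs ht
  -- If a triangle lies inside `M`, dropping one of its atoms leaves a model.
  have someMissing : ∀ i : Fin k, ∃ t, atom i t ∉ M := by
    intro i
    by_contra! hall
    refine herase _ (hall 0) (isModel_theory_iff.mpr fun j s t hst => ?_)
    simp only [Finset.mem_erase, ne_eq, atom_inj]
    by_cases hji : j = i
    · subst hji
      by_cases hs : s = 0
      · exact Or.inr ⟨fun h => hst (hs.trans h.2.symm), hall t⟩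
      · exact Or.inl ⟨fun h => hs h.2, hall s⟩
    · exact (isModel_theory_iff.mp hmodel j s t hst).imp
        (fun h => ⟨fun h' => hji h'.1, h⟩) (fun h => ⟨fun h' => hji h'.1, h⟩)
  choose g hg using someMissing
  refine ⟨g, Finset.ext fun a => ?_⟩
  by_cases ha : a < 3 * k
  · obtain ⟨i, t, rfl⟩ := exists_atom_eq ha
    simp only [Finset.mem_sdiff, Finset.mem_range, atom_lt, true_and, atom_mem_transversal_iff]
    exact ⟨fun h hgt => hg i (hgt ▸ h),
      fun hgt => by_contra fun h => hgt (atMostOneMissing i _ _ (hg i) h)⟩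
  · exact iff_of_false (fun h => ha (Finset.mem_range.mp (hsub h)))
      (fun h => ha (Finset.mem_range.mp (Finset.sdiff_subset h)))

theorem minModels_theory :
    (thAtoms (theory k)).powerset.filter (fun M => isMinModel M (theory k)) =
      Finset.univ.image fun g : Fin k → Fin 3 => Finset.range (3 * k) \ transversal g := by
  ext M
  simp only [Finset.mem_filter, Finset.mem_powerset, Finset.mem_image, Finset.mem_univ, true_and]
  constructor
  · rintro ⟨-, hM⟩
    obtain ⟨g, rfl⟩ := exists_eq_compl_transversal_of_isMinModel hM
    exact ⟨g, rfl⟩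
  · rintro ⟨g, rfl⟩
    exact ⟨(isMinModel_compl_transversal g).2.1, isMinModel_compl_transversal g⟩

theorem card_minModels_theory :
    ((thAtoms (theory k)).powerset.filter (fun M => isMinModel M (theory k))).card = 3 ^ k := by
  rw [minModels_theory, Finset.card_image_of_injective]
  · simp
  · intro g g' h
    apply transversal_injective
    simpa only [Finset.sdiff_sdiff_eq_self (transversal_subset _)] using
      congrArg (Finset.range (3 * k) \ ·) h

end Triangles

theorem two_cnf_bound_attained_general (k : ℕ) :
    ∃ T : CTheory,
      (∀ c ∈ T, Clause.ok c) ∧ (∀ c ∈ T, c.card ≤ 2) ∧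
      (thAtoms T).card = 3 * k ∧
      ((thAtoms T).powerset.filter (fun M => isMinModel M T)).card = 3 ^ k := by
  refine ⟨Triangles.theory k, fun c hc => ?_, fun c hc => ?_, ?_, Triangles.card_minModels_theory⟩
  · intro a ⟨_, ha⟩
    simpa using Triangles.isPositive_theory c hc _ ha
  · obtain ⟨i, s, t, -, rfl⟩ := Triangles.mem_theory.mp hc
    exact Finset.card_le_two
  · rw [Triangles.thAtoms_theory, Finset.card_range]

/-- For every `k ≥ 1` there is a 2-CNF theory with exactly `n = 3k` atoms having exactly
`3^k = 3^(n/3)` minimal models; hence the bound `3^(n/3)` is attained. -/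
theorem two_cnf_bound_attained (k : ℕ) (hk : 0 < k) :
    ∃ T : CTheory,
      (∀ c ∈ T, Clause.ok c) ∧ (∀ c ∈ T, c.card ≤ 2) ∧
      (thAtoms T).card = 3 * k ∧
      ((thAtoms T).powerset.filter (fun M => isMinModel M T)).card = 3 ^ k :=
  two_cnf_bound_attained_general k
end
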